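/- arXiv:1502.06644 — 4 statements merged into one kernel-verified Lean document; each statement's English description precedes it below -/
import Mathlib

section
/- Let (Ω, 𝓕) be a measurable space, let l ≤ m be positive natural numbers, let μ₁, …, μ_l be pairwise distinct probability measures on Ω with weights a₁, …, a_l > 0 summing to 1, and let ν₁, …, ν_m be pairwise distinct probability measures on Ω with weights b₁, …, b_m > 0 summing to 1. If ∑_{i=1}^{l} a_i · μ_i^{×(2m−1)} = ∑_{j=1}^{m} b_j · ν_j^{×(2m−1)} as measures on Ω^{2m−1}, then l = m and there exists a permutation ψ of {1,…,m} such that ν_{ψ(i)} = μ_i and b_{ψ(i)} = a_i for every i. (Equivalently: every mixture of measures with m components is (2m−1)-identifiable.) -/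
/-!
Evaluating both product laws on measurable boxes `A₁ × ⋯ × Aₙ` turns the hypothesis into a
linear relation among the functions `(A₁, …, Aₙ) ↦ ∏ₜ ρ(Aₜ)`, with `ρ` ranging over the at most
`2m = n + 1` distinct components of the two mixtures. Such tensor powers of at most `n + 1`
distinct functions taking the value `1` at a common point (here `ρ(Ω) = 1`) are linearly
independent: subtracting `f_j(y)` times the relation at `(e, x)` from the relation at `(y, x)`
eliminates `f_j` and lowers `n` by one. So both mixtures have the same weight on every measure.
-/

open MeasureTheory Finset

section TensorPowers

variable {ι X R : Type*} [CommRing R] [NoZeroDivisors R] {f : ι → X → R} {e : X}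

theorem eq_zero_of_sum_mul_prod_apply_eq_zero [DecidableEq ι] (s : Finset ι)
    (hf : Set.InjOn f s) (he : ∀ i ∈ s, f i e = 1) {n : ℕ} (hs : #s ≤ n + 1) {c : ι → R}
    (hc : ∀ x : Fin n → X, ∑ i ∈ s, c i * ∏ t, f i (x t) = 0) : ∀ i ∈ s, c i = 0 := by
  induction s using Finset.induction_on generalizing n c with
  | empty => simp
  | insert j s hj ih =>
    rw [card_insert_of_notMem hj] at hs
    have hs_zero : ∀ i ∈ s, c i = 0 := by
      intro i hi
      obtain ⟨n, rfl⟩ : ∃ n', n = n' + 1 :=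
        Nat.exists_eq_add_one.mpr (by have := card_pos.mpr ⟨i, hi⟩; omega)
      obtain ⟨y, hy⟩ : ∃ y, f i y ≠ f j y := by
        by_contra! h
        exact ne_of_mem_of_not_mem hi hj
          (hf (mem_insert_of_mem hi) (mem_insert_self j s) (funext h))
      have hdiff : ∀ x : Fin n → X,
          ∑ k ∈ s, c k * (f k y - f j y) * ∏ t, f k (x t) = 0 := fun x =>
        calc ∑ k ∈ s, c k * (f k y - f j y) * ∏ t, f k (x t)
            = ∑ k ∈ insert j s, c k * (f k y - f j y) * ∏ t, f k (x t) := by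
              rw [sum_insert hj, sub_self, mul_zero, zero_mul, zero_add]
          _ = ∑ k ∈ insert j s, c k * ∏ t, f k ((Fin.cons y x : Fin (n + 1) → X) t) -
              f j y * ∑ k ∈ insert j s, c k * ∏ t, f k ((Fin.cons e x : Fin (n + 1) → X) t) := by
              rw [mul_sum, ← sum_sub_distrib]
              refine sum_congr rfl fun k hk => ?_
              simp only [Fin.prod_univ_succ, Fin.cons_zero, Fin.cons_succ, he k hk]
              ring
          _ = 0 := by rw [hc, hc, mul_zero, sub_zero]
      have := ih (hf.mono (subset_insert j s)) (fun k hk => he k (mem_insert_of_mem hk))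
        (by omega) hdiff i hi
      exact (mul_eq_zero.mp this).resolve_right (sub_ne_zero.mpr hy)
    have hj_zero : c j = 0 := by
      have := hc fun _ => e
      rw [sum_congr rfl fun k hk => by rw [he k hk, prod_const_one, mul_one], sum_insert hj,
        sum_eq_zero hs_zero, add_zero] at this
      exact this
    intro i hi
    rcases mem_insert.mp hi with rfl | hi
    exacts [hj_zero, hs_zero i hi]

theorem linearIndepOn_prod_apply (s : Finset ι) (hf : Set.InjOn f s) (he : ∀ i ∈ s, f i e = 1)
    {n : ℕ} (hs : #s ≤ n + 1) :
    LinearIndepOn R (fun i (x : Fin n → X) => ∏ t, f i (x t)) (s : Set ι) := by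
  classical
  refine linearIndepOn_iff'.mpr fun t g hts hg => ?_
  rw [coe_subset] at hts
  exact eq_zero_of_sum_mul_prod_apply_eq_zero t (hf.mono hts) (fun i hi => he i (hts hi))
    ((card_le_card hts).trans hs) fun x => by simpa using congrFun hg x

end TensorPowers

section Weights

variable {ι κ κ' M : Type*} [Fintype κ] [Fintype κ'] [AddCommMonoid M]

theorem sum_single_apply_of_injective {μ : κ → ι} (hμ : Function.Injective μ) (a : κ → M)
    (i : κ) : (∑ k, Finsupp.single (μ k) (a k)) (μ i) = a i := by
  classical
  simp [Finsupp.finsetSum_apply, Finsupp.single_apply, hμ.eq_iff]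

theorem sum_single_apply_of_notMem_range {μ : κ → ι} (a : κ → M) {x : ι}
    (hx : x ∉ Set.range μ) : (∑ k, Finsupp.single (μ k) (a k)) x = 0 := by
  rw [Finsupp.finsetSum_apply]
  exact sum_eq_zero fun k _ => Finsupp.single_eq_of_ne fun h => hx ⟨k, h.symm⟩

theorem range_subset_of_sum_single_eq {μ : κ → ι} {ν : κ' → ι} (hμ : Function.Injective μ)
    {a : κ → M} {b : κ' → M} (ha : ∀ i, a i ≠ 0)
    (h : ∑ i, Finsupp.single (μ i) (a i) = ∑ j, Finsupp.single (ν j) (b j)) :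
    Set.range μ ⊆ Set.range ν := by
  rintro _ ⟨i, rfl⟩
  by_contra hi
  apply ha i
  rw [← sum_single_apply_of_injective hμ a i, h, sum_single_apply_of_notMem_range b hi]

theorem exists_equiv_of_sum_single_eq {μ : κ → ι} {ν : κ' → ι} (hμ : Function.Injective μ)
    (hν : Function.Injective ν) {a : κ → M} {b : κ' → M} (ha : ∀ i, a i ≠ 0)
    (hb : ∀ j, b j ≠ 0)
    (h : ∑ i, Finsupp.single (μ i) (a i) = ∑ j, Finsupp.single (ν j) (b j)) :
    ∃ ψ : κ ≃ κ', ∀ i, ν (ψ i) = μ i ∧ b (ψ i) = a i := by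
  have hrange : Set.range μ = Set.range ν :=
    (range_subset_of_sum_single_eq hμ ha h).antisymm
      (range_subset_of_sum_single_eq hν hb h.symm)
  let ψ : κ ≃ κ' := (Equiv.ofInjective μ hμ).trans
    ((Equiv.setCongr hrange).trans (Equiv.ofInjective ν hν).symm)
  have hψ : ∀ i, ν (ψ i) = μ i := fun i => Equiv.apply_ofInjective_symm hν _
  refine ⟨ψ, fun i => ⟨hψ i, ?_⟩⟩
  rw [← sum_single_apply_of_injective hν b, hψ, ← h, sum_single_apply_of_injective hμ]

theorem sum_single_mem_supported {R : Type*} [Semiring R] {μ : κ → ι} (a : κ → R) {s : Set ι}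
    (hμ : ∀ i, μ i ∈ s) : ∑ i, Finsupp.single (μ i) (a i) ∈ Finsupp.supported R R s :=
  Submodule.sum_mem _ fun i _ => Finsupp.single_mem_supported R _ (hμ i)

end Weights

section Measures

variable {Ω : Type*} [MeasurableSpace Ω]

theorem measureReal_injOn_isFiniteMeasure :
    Set.InjOn (fun (ρ : Measure Ω) (s : {s : Set Ω // MeasurableSet s}) => ρ.real s)
      {ρ | IsFiniteMeasure ρ} := fun ρ (_ : IsFiniteMeasure ρ) ρ' (_ : IsFiniteMeasure ρ') h =>
  Measure.ext fun s hs => (measureReal_eq_measureReal_iff).mp (congrFun h ⟨s, hs⟩)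

theorem measureReal_finset_sum_ofReal_smul {κ : Type*} (S : Finset κ) (ρ : κ → Measure Ω)
    [∀ k, IsFiniteMeasure (ρ k)] {a : κ → ℝ} (ha : ∀ k, 0 ≤ a k) (s : Set Ω) :
    (∑ k ∈ S, ENNReal.ofReal (a k) • ρ k).real s = ∑ k ∈ S, a k * (ρ k).real s := by
  simp only [measureReal_def, Measure.finsetSum_apply, Measure.smul_apply, smul_eq_mul]
  rw [ENNReal.toReal_sum fun k _ => by finiteness]
  simp [ENNReal.toReal_ofReal (ha _)]

theorem measureReal_pi_univ_pi {ι : Type*} [Fintype ι] (ρ : ι → Measure Ω)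
    [∀ i, SigmaFinite (ρ i)] (s : ι → Set Ω) :
    (Measure.pi ρ).real (Set.univ.pi s) = ∏ i, (ρ i).real (s i) := by
  rw [measureReal_def, Measure.pi_pi, ENNReal.toReal_prod]
  rfl

end Measures

theorem mixture_identifiable_of_eq_prod_law_general
    {Ω : Type*} [MeasurableSpace Ω] (l m : ℕ) (hlm : l ≤ m)
    (μ : Fin l → Measure Ω) (hμprob : ∀ i, IsProbabilityMeasure (μ i))
    (hμdist : Function.Injective μ)
    (a : Fin l → ℝ) (ha : ∀ i, 0 < a i)
    (ν : Fin m → Measure Ω) (hνprob : ∀ j, IsProbabilityMeasure (ν j))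
    (hνdist : Function.Injective ν)
    (b : Fin m → ℝ) (hb : ∀ j, 0 < b j)
    (heq : ∑ i, ENNReal.ofReal (a i) • Measure.pi (fun _ : Fin (2 * m - 1) => μ i)
         = ∑ j, ENNReal.ofReal (b j) • Measure.pi (fun _ : Fin (2 * m - 1) => ν j)) :
    l = m ∧ ∃ ψ : Fin l ≃ Fin m, ∀ i, ν (ψ i) = μ i ∧ b (ψ i) = a i := by
  classical
  let P (ρ : Measure Ω) (x : Fin (2 * m - 1) → {s : Set Ω // MeasurableSet s}) : ℝ :=
    ∏ t, ρ.real (x t)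
  let S := univ.image μ ∪ univ.image ν
  have hS : ∀ ρ ∈ S, IsProbabilityMeasure ρ := by
    simp only [S, mem_union, mem_image, mem_univ, true_and]
    rintro _ (⟨i, rfl⟩ | ⟨j, rfl⟩)
    exacts [hμprob i, hνprob j]
  have hindep : LinearIndepOn ℝ P (S : Set (Measure Ω)) :=
    linearIndepOn_prod_apply (e := ⟨Set.univ, .univ⟩) S
      (measureReal_injOn_isFiniteMeasure.mono fun ρ hρ =>
        have := hS ρ hρ; (inferInstance : IsFiniteMeasure ρ))
      (fun ρ hρ => @probReal_univ _ _ ρ (hS ρ hρ))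
      (by grw [card_union_le, card_image_le, card_image_le]; simp; omega)
  have hcomb : Finsupp.linearCombination ℝ P (∑ i, Finsupp.single (μ i) (a i))
      = Finsupp.linearCombination ℝ P (∑ j, Finsupp.single (ν j) (b j)) := by
    funext x
    have := congrArg (fun M => M.real (Set.univ.pi fun t => (x t).1)) heq
    simpa [P, measureReal_finset_sum_ofReal_smul _ _ (fun i => (ha i).le),
      measureReal_finset_sum_ofReal_smul _ _ (fun j => (hb j).le), measureReal_pi_univ_pi]
      using this
  have hweights : ∑ i, Finsupp.single (μ i) (a i) = ∑ j, Finsupp.single (ν j) (b j) :=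
    linearIndepOn_iffₛ.mp hindep _ (sum_single_mem_supported a fun i => by simp [S])
      _ (sum_single_mem_supported b fun j => by simp [S]) hcomb
  obtain ⟨ψ, hψ⟩ := exists_equiv_of_sum_single_eq hμdist hνdist (fun i => (ha i).ne')
    (fun j => (hb j).ne') hweights
  exact ⟨by simpa using Fintype.card_congr ψ, ψ, hψ⟩

/-- **Theorem 1 (identifiability).** If two mixtures of pairwise distinct probability
measures, with `l ≤ m` components respectively, have equal `(2m-1)`-fold product laws,
then they are the same mixture: `l = m` and the components and weights agree up to a
permutation. -/
theorem mixture_identifiable_of_eq_prod_law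
    {Ω : Type*} [MeasurableSpace Ω] (l m : ℕ) (hl : 0 < l) (hlm : l ≤ m)
    (μ : Fin l → Measure Ω) (hμprob : ∀ i, IsProbabilityMeasure (μ i))
    (hμdist : Function.Injective μ)
    (a : Fin l → ℝ) (ha : ∀ i, 0 < a i) (hasum : ∑ i, a i = 1)
    (ν : Fin m → Measure Ω) (hνprob : ∀ j, IsProbabilityMeasure (ν j))
    (hνdist : Function.Injective ν)
    (b : Fin m → ℝ) (hb : ∀ j, 0 < b j) (hbsum : ∑ j, b j = 1)
    (heq : ∑ i, ENNReal.ofReal (a i) • Measure.pi (fun _ : Fin (2 * m - 1) => μ i)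
         = ∑ j, ENNReal.ofReal (b j) • Measure.pi (fun _ : Fin (2 * m - 1) => ν j)) :
    l = m ∧ ∃ ψ : Fin l ≃ Fin m, ∀ i, ν (ψ i) = μ i ∧ b (ψ i) = a i :=
  mixture_identifiable_of_eq_prod_law_general l m hlm μ hμprob hμdist a ha ν hνprob hνdist b hb heq
end

section
/- Let (Ω, 𝓕) be a measurable space whose σ-algebra 𝓕 contains a set F with both F and its complement nonempty (i.e. 𝓕 ≠ {∅, Ω}). Then for every m ≥ 1 there exist probability measures μ₁, …, μ_m and ν₁, …, ν_m on Ω, with the 2m measures μ₁,…,μ_m,ν₁,…,ν_m pairwise distinct, and positive weights a₁,…,a_m and b₁,…,b_m each summing to 1, such that ∑_{i=1}^{m} a_i · μ_i^{×(2m−2)} = ∑_{j=1}^{m} b_j · ν_j^{×(2m−2)} as measures on Ω^{2m−2}. In particular, there exists a mixture of measures with m components that is not (2m−2)-identifiable. -/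
/-!
Fix `x ∈ F` and `y ∉ F` and consider the two-point measures `r δ_x + (1 - r) δ_y`, `r ∈ [0, 1]`.
Their `n`-fold products give every box `∏ B k` a mass that is a polynomial of degree `≤ n` in `r`,
so two mixtures of them have equal `n`-fold products as soon as the mixing distributions on
`[0, 1]` have the same moments up to order `n`. For `n = 2m - 2` such a pair of distributions with
`m` atoms each comes from the vanishing of the `(2m - 1)`-st forward difference of a polynomial of
degree `≤ 2m - 2`: the binomial weights at the even nodes `j / (2m - 1)` balance those at the odd
ones.
-/

open MeasureTheory Polynomial Finset Set

theorem Finset.sum_range_two_mul {M : Type*} [AddCommMonoid M] (g : ℕ → M) (m : ℕ) :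
    ∑ k ∈ range (2 * m), g k = ∑ i ∈ range m, g (2 * i) + ∑ i ∈ range m, g (2 * i + 1) := by
  induction m with
  | zero => simp
  | succ m ih =>
    rw [Nat.mul_succ, sum_range_succ, sum_range_succ, ih, sum_range_succ, sum_range_succ]
    abel

theorem Polynomial.sum_range_neg_one_pow_mul_choose_mul_eval {R : Type*} [CommRing R] {f : R[X]}
    {n : ℕ} (hf : f.natDegree < n) :
    ∑ k ∈ range (n + 1), (-1) ^ (n - k) * n.choose k * f.eval (k : R) = 0 := by
  have := congr_fun (fwdDiff_iter_eq_zero_of_degree_lt hf) 0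
  simpa [fwdDiff_iter_eq_sum_shift, zsmul_eq_mul] using this

theorem sum_choose_even_mul_eval_eq_sum_choose_odd (k : ℕ) {f : ℝ[X]} (hf : f.natDegree ≤ 2 * k) :
    ∑ i ∈ range (k + 1),
        ((2 * k + 1).choose (2 * i) : ℝ) * f.eval (((2 * i : ℕ) : ℝ) / (2 * k + 1)) =
      ∑ i ∈ range (k + 1),
        ((2 * k + 1).choose (2 * i + 1) : ℝ) * f.eval (((2 * i + 1 : ℕ) : ℝ) / (2 * k + 1)) := by
  set g := f.comp (C (2 * k + 1 : ℝ)⁻¹ * X)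
  have hg : g.natDegree < 2 * k + 1 := by
    rw [natDegree_comp, natDegree_C_mul_X _ (by positivity)]
    omega
  have h := sum_range_neg_one_pow_mul_choose_mul_eval hg
  rw [show 2 * k + 1 + 1 = 2 * (k + 1) by ring, sum_range_two_mul] at h
  have hodd : ∀ i ∈ range (k + 1), ((-1 : ℝ) ^ (2 * k + 1 - 2 * i)) = -1 := fun i hi =>
    Odd.neg_one_pow ⟨k - i, by simp at hi; omega⟩
  have heven : ∀ i ∈ range (k + 1), ((-1 : ℝ) ^ (2 * k + 1 - (2 * i + 1))) = 1 := fun i hi =>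
    Even.neg_one_pow ⟨k - i, by simp at hi; omega⟩
  have hval : ∀ j : ℕ, g.eval (j : ℝ) = f.eval ((j : ℝ) / (2 * k + 1)) := fun j => by
    simp [g, div_eq_inv_mul]
  rw [eq_comm, ← sub_eq_zero, ← h, sub_eq_add_neg, ← sum_neg_distrib, add_comm]
  congr 1 <;> refine sum_congr rfl fun i hi => ?_
  · rw [hodd i hi, hval]; ring
  · rw [heven i hi, hval]; ring

theorem exists_distinct_atoms_eq_moments (m : ℕ) (hm : 1 ≤ m) :
    ∃ p q a b : Fin m → ℝ,
      (∀ i, p i ∈ Set.Icc 0 1) ∧ (∀ j, q j ∈ Set.Icc 0 1) ∧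
      Function.Injective p ∧ Function.Injective q ∧ (∀ i j, p i ≠ q j) ∧
      (∀ i, 0 < a i) ∧ (∀ j, 0 < b j) ∧ ∑ i, a i = 1 ∧ ∑ j, b j = 1 ∧
      ∀ f : ℝ[X], f.natDegree ≤ 2 * m - 2 →
        ∑ i, a i * f.eval (p i) = ∑ j, b j * f.eval (q j) := by
  obtain ⟨k, rfl⟩ := Nat.exists_eq_add_of_le' hm
  set t : ℕ → ℝ := fun j => (j : ℝ) / (2 * k + 1)
  have ht : StrictMono t := fun i j hij => by
    simp only [t]
    gcongr
  have ht_mem : ∀ j ≤ 2 * k + 1, t j ∈ Set.Icc 0 1 := fun j hj =>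
    ⟨by positivity, div_le_one_of_le₀ (by exact_mod_cast hj) (by positivity)⟩
  have hmoments : ∀ f : ℝ[X], f.natDegree ≤ 2 * k →
      ∑ i : Fin (k + 1), ((2 * k + 1).choose (2 * i) : ℝ) * f.eval (t (2 * i)) =
        ∑ i : Fin (k + 1), ((2 * k + 1).choose (2 * i + 1) : ℝ) * f.eval (t (2 * i + 1)) :=
    fun f hf => by
      rw [Fin.sum_univ_eq_sum_range
          (fun i => ((2 * k + 1).choose (2 * i) : ℝ) * f.eval (t (2 * i))),
        Fin.sum_univ_eq_sum_range
          (fun i => ((2 * k + 1).choose (2 * i + 1) : ℝ) * f.eval (t (2 * i + 1)))]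
      exact sum_choose_even_mul_eval_eq_sum_choose_odd k hf
  set S := ∑ i : Fin (k + 1), ((2 * k + 1).choose (2 * i) : ℝ)
  have hchoose : ∀ j ≤ 2 * k + 1, (0 : ℝ) < (2 * k + 1).choose j :=
    fun j hj => by exact_mod_cast Nat.choose_pos hj
  have hS : 0 < S := sum_pos (fun i _ => hchoose _ (by omega)) univ_nonempty
  refine ⟨fun i => t (2 * i), fun i => t (2 * i + 1),
    fun i => (2 * k + 1).choose (2 * i) / S, fun i => (2 * k + 1).choose (2 * i + 1) / S,
    fun i => ht_mem _ (by omega), fun i => ht_mem _ (by omega),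
    fun i j h => Fin.ext (by simpa using ht.injective h),
    fun i j h => Fin.ext (by simpa using ht.injective h),
    fun i j h => by have := ht.injective h; omega,
    fun i => div_pos (hchoose _ (by omega)) hS, fun i => div_pos (hchoose _ (by omega)) hS,
    ?_, ?_, fun f hf => ?_⟩
  · rw [← sum_div, div_self hS.ne']
  · -- the moment identity for `f = 1` balances the total weights
    rw [← sum_div, div_eq_one_iff_eq hS.ne']
    simpa using (hmoments 1 (by simp)).symm
  · simp only [div_mul_eq_mul_div, ← sum_div, hmoments f (by omega)]

namespace MeasureTheory.Measure

variable {Ω : Type*} [MeasurableSpace Ω] (α β : Measure Ω)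

noncomputable def convexComb (r : ℝ) : Measure Ω :=
  ENNReal.ofReal r • α + ENNReal.ofReal (1 - r) • β

noncomputable def boxPoly {ι : Type*} [Fintype ι] (B : ι → Set Ω) : ℝ[X] :=
  ∏ k, (C (α.real (B k) - β.real (B k)) * X + C (β.real (B k)))

theorem natDegree_boxPoly_le {ι : Type*} [Fintype ι] (B : ι → Set Ω) :
    (boxPoly α β B).natDegree ≤ Fintype.card ι :=
  (natDegree_prod_le _ _).trans <| (sum_le_card_nsmul _ _ 1 fun _ _ => natDegree_linear_le).trans
    (by simp)

variable [IsProbabilityMeasure α] [IsProbabilityMeasure β] {r : ℝ}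

theorem isProbabilityMeasure_convexComb (hr : r ∈ Set.Icc 0 1) :
    IsProbabilityMeasure (convexComb α β r) :=
  ⟨by simp [convexComb, ← ENNReal.ofReal_add hr.1 (sub_nonneg.mpr hr.2)]⟩

theorem convexComb_real_apply (hr : r ∈ Set.Icc 0 1) (s : Set Ω) :
    (convexComb α β r).real s = r * α.real s + (1 - r) * β.real s := by
  rw [measureReal_def, convexComb, add_apply, smul_apply, smul_apply, smul_eq_mul, smul_eq_mul,
    ENNReal.toReal_add (by finiteness) (by finiteness), ENNReal.toReal_mul, ENNReal.toReal_mul,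
    ENNReal.toReal_ofReal hr.1, ENNReal.toReal_ofReal (sub_nonneg.mpr hr.2), measureReal_def,
    measureReal_def]

theorem injOn_convexComb {s : Set Ω} (hs : α.real s ≠ β.real s) :
    Set.InjOn (convexComb α β) (Set.Icc 0 1) := fun r hr r' hr' h => by
  have := congr_arg (fun μ => μ.real s) h
  simp only [convexComb_real_apply α β hr, convexComb_real_apply α β hr'] at this
  exact mul_right_cancel₀ (sub_ne_zero.mpr hs) (by linarith)

variable {ι : Type*} [Fintype ι]

theorem eval_boxPoly (hr : r ∈ Set.Icc 0 1) (B : ι → Set Ω) :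
    (boxPoly α β B).eval r = ∏ k, (convexComb α β r).real (B k) := by
  simp only [boxPoly, eval_prod, eval_add, eval_mul, eval_C, eval_X, convexComb_real_apply α β hr]
  exact prod_congr rfl fun _ _ => by ring

theorem pi_convexComb_univ_pi (hr : r ∈ Set.Icc 0 1) (B : ι → Set Ω) :
    Measure.pi (fun _ : ι => convexComb α β r) (univ.pi B) =
      ENNReal.ofReal ((boxPoly α β B).eval r) := by
  have := isProbabilityMeasure_convexComb α β hr
  rw [pi_pi, eval_boxPoly α β hr, ENNReal.ofReal_prod_of_nonneg fun _ _ => measureReal_nonneg]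
  exact Finset.prod_congr rfl fun _ _ => (ofReal_measureReal (measure_ne_top _ _)).symm

theorem sum_smul_pi_convexComb_univ_pi {κ : Type*} [Fintype κ] {p a : κ → ℝ}
    (hp : ∀ i, p i ∈ Set.Icc 0 1) (ha : ∀ i, 0 ≤ a i) (B : ι → Set Ω) :
    (∑ i, ENNReal.ofReal (a i) • Measure.pi (fun _ : ι => convexComb α β (p i))) (univ.pi B) =
      ENNReal.ofReal (∑ i, a i * (boxPoly α β B).eval (p i)) := by
  rw [finsetSum_apply, ENNReal.ofReal_sum_of_nonneg fun i _ => mul_nonneg (ha i)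
    (by rw [eval_boxPoly α β (hp i)]; exact prod_nonneg fun _ _ => measureReal_nonneg)]
  refine Finset.sum_congr rfl fun i _ => ?_
  rw [smul_apply, smul_eq_mul, pi_convexComb_univ_pi α β (hp i), ENNReal.ofReal_mul (ha i)]

theorem sum_smul_pi_convexComb_eq_of_moments {κ₁ κ₂ : Type*} [Fintype κ₁] [Fintype κ₂]
    {p a : κ₁ → ℝ} {q b : κ₂ → ℝ} (hp : ∀ i, p i ∈ Set.Icc 0 1) (hq : ∀ j, q j ∈ Set.Icc 0 1)
    (ha : ∀ i, 0 ≤ a i) (hb : ∀ j, 0 ≤ b j)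
    (hmoments : ∀ f : ℝ[X], f.natDegree ≤ Fintype.card ι →
      ∑ i, a i * f.eval (p i) = ∑ j, b j * f.eval (q j)) :
    ∑ i, ENNReal.ofReal (a i) • Measure.pi (fun _ : ι => convexComb α β (p i)) =
      ∑ j, ENNReal.ofReal (b j) • Measure.pi (fun _ : ι => convexComb α β (q j)) := by
  have hbox : ∀ B : ι → Set Ω,
      (∑ i, ENNReal.ofReal (a i) • Measure.pi (fun _ : ι => convexComb α β (p i))) (univ.pi B) =
        (∑ j, ENNReal.ofReal (b j) • Measure.pi (fun _ : ι => convexComb α β (q j))) (univ.pi B) :=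
    fun B => by
      rw [sum_smul_pi_convexComb_univ_pi α β hp ha, sum_smul_pi_convexComb_univ_pi α β hq hb,
        hmoments _ (natDegree_boxPoly_le α β B)]
  have : IsFiniteMeasure
      (∑ i, ENNReal.ofReal (a i) • Measure.pi (fun _ : ι => convexComb α β (p i))) :=
    ⟨by rw [← Set.pi_univ, sum_smul_pi_convexComb_univ_pi α β hp ha]; exact ENNReal.ofReal_lt_top⟩
  refine ext_of_generate_finite _ generateFrom_pi.symm isPiSystem_pi ?_
    (by rw [← Set.pi_univ]; exact hbox _)
  rintro _ ⟨B, -, rfl⟩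
  exact hbox B

end MeasureTheory.Measure

open Measure in
/-- **Theorem 2 (non-identifiability).** On any measurable space whose σ-algebra is
nontrivial, for every `m ≥ 1` there are two distinct mixtures of `m` pairwise distinct
probability measures each with equal `(2m-2)`-fold product laws; i.e. some mixture of
`m` components is not `(2m-2)`-identifiable. -/
theorem exists_mixture_not_identifiable
    {Ω : Type*} [MeasurableSpace Ω] (F : Set Ω) (hF : MeasurableSet F)
    (hFne : F.Nonempty) (hFcne : Fᶜ.Nonempty) (m : ℕ) (hm : 1 ≤ m) :
    ∃ (μ ν : Fin m → Measure Ω) (a b : Fin m → ℝ),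
      (∀ i, IsProbabilityMeasure (μ i)) ∧ (∀ j, IsProbabilityMeasure (ν j)) ∧
      Function.Injective μ ∧ Function.Injective ν ∧ (∀ i j, μ i ≠ ν j) ∧
      (∀ i, 0 < a i) ∧ (∀ j, 0 < b j) ∧ (∑ i, a i = 1) ∧ (∑ j, b j = 1) ∧
      ∑ i, ENNReal.ofReal (a i) • Measure.pi (fun _ : Fin (2 * m - 2) => μ i)
        = ∑ j, ENNReal.ofReal (b j) • Measure.pi (fun _ : Fin (2 * m - 2) => ν j) := by
  obtain ⟨x, hx⟩ := hFne
  obtain ⟨y, hy⟩ := hFcne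
  obtain ⟨p, q, a, b, hp, hq, hp_inj, hq_inj, hpq, ha, hb, ha_sum, hb_sum, hmoments⟩ :=
    exists_distinct_atoms_eq_moments m hm
  have hinj : InjOn (convexComb (dirac x) (dirac y)) (Icc 0 1) :=
    injOn_convexComb _ _ (s := F) (by simp [measureReal_def, dirac_apply' _ hF, hx, hy.out])
  refine ⟨fun i => convexComb (dirac x) (dirac y) (p i),
    fun j => convexComb (dirac x) (dirac y) (q j), a, b,
    fun i => isProbabilityMeasure_convexComb _ _ (hp i), fun j => isProbabilityMeasure_convexComb _ _ (hq j),
    fun i j h => hp_inj (hinj (hp i) (hp j) h), fun i j h => hq_inj (hinj (hq i) (hq j) h),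
    fun i j h => hpq i j (hinj (hp i) (hq j) h), ha, hb, ha_sum, hb_sum, ?_⟩
  exact sum_smul_pi_convexComb_eq_of_moments _ _ hp hq (fun i => (ha i).le) (fun j => (hb j).le)
    fun f hf => hmoments f (by simpa using hf)
end

section
/- Let n > 1 and let h₁, …, hₙ be elements of a real inner product space (e.g. a Hilbert space) such that no h_i is zero and no pair h_i, h_j with i ≠ j is collinear (i.e. no h_i is a scalar multiple of h_j). Then the (n−1)-fold tensor powers h₁^{⊗(n−1)}, …, hₙ^{⊗(n−1)}, regarded as elements of the (n−1)-fold tensor power of the space over ℝ, are linearly independent. -/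
open scoped TensorProduct
open Module PiTensorProduct

section

variable {K V : Type*} [Field K] [AddCommGroup V] [Module K V]

theorem Module.exists_dual_apply_eq_zero_apply_ne_zero {x y : V} (hy : y ∉ K ∙ x) :
    ∃ f : Dual K V, f x = 0 ∧ f y ≠ 0 := by
  obtain ⟨f, hfy, hfx⟩ := Submodule.exists_dual_map_eq_bot_of_notMem hy inferInstance
  refine ⟨f, ?_, hfy⟩
  simpa [Submodule.map_span, Submodule.span_singleton_eq_bot] using hfx

theorem LinearIndependent.of_pairwise_dual_eq_zero_ne_zero {ι M : Type*} [AddCommGroup M]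
    [Module K M] (v : ι → M) (f : ι → Dual K M) (h0 : Pairwise fun i j ↦ f i (v j) = 0)
    (hne : ∀ i, f i (v i) ≠ 0) : LinearIndependent K v :=
  .of_pairwise_dual_eq_zero_one v (fun i ↦ (f i (v i))⁻¹ • f i)
    (fun i j hij ↦ by simp [h0 hij]) (fun i ↦ by simp [hne i])

theorem linearIndependent_tprod_of_pairwise_notMem_span_singleton {m : ℕ}
    (v : Fin (m + 1) → V) (hv : Pairwise fun i j ↦ v j ∉ K ∙ v i) :
    LinearIndependent K fun i ↦ ⨂ₜ[K] _ : Fin m, v i := by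
  -- For each `j`, the product of forms `f j s` vanishing on `v (j.succAbove s)` but not on `v j`
  -- separates `v j ^ ⊗m` from the other tensor powers.
  choose f hf_zero hf_ne using fun j s ↦
    exists_dual_apply_eq_zero_apply_ne_zero (hv (Fin.succAbove_ne j s))
  refine .of_pairwise_dual_eq_zero_ne_zero _ (fun j ↦ dualDistrib (⨂ₜ[K] s, f j s)) ?_ ?_
  · intro j i hji
    obtain ⟨s, rfl⟩ := Fin.exists_succAbove_eq hji.symm
    simpa [dualDistrib_apply] using Finset.prod_eq_zero (Finset.mem_univ s) (hf_zero j s)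
  · intro j
    simpa [dualDistrib_apply] using Finset.prod_ne_zero_iff.2 fun s _ ↦ hf_ne j s

end

theorem tensor_powers_linearIndependent_general
    {H : Type*} [NormedAddCommGroup H] [InnerProductSpace ℝ H]
    (n : ℕ) (h : Fin n → H)
    (hcol : ∀ i j, i ≠ j → ∀ c : ℝ, h i ≠ c • h j) :
    LinearIndependent ℝ
      (fun i : Fin n => PiTensorProduct.tprod ℝ (fun _ : Fin (n - 1) => h i)) := by
  cases n with
  | zero => exact linearIndependent_empty_type
  | succ m =>
    refine linearIndependent_tprod_of_pairwise_notMem_span_singleton h fun i j hij hmem ↦ ?_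
    obtain ⟨c, hc⟩ := Submodule.mem_span_singleton.1 hmem
    exact hcol j i hij.symm c hc.symm

/-- **Linear independence of tensor powers.** If `h₁, …, hₙ` (`n > 1`) are nonzero,
pairwise non-collinear vectors of a real inner product space, then the `(n-1)`-fold
tensor powers `hᵢ^{⊗(n-1)}` are linearly independent in the `(n-1)`-fold tensor power
of the space over `ℝ`. -/
theorem tensor_powers_linearIndependent
    {H : Type*} [NormedAddCommGroup H] [InnerProductSpace ℝ H]
    (n : ℕ) (hn : 1 < n) (h : Fin n → H) (h0 : ∀ i, h i ≠ 0)
    (hcol : ∀ i j, i ≠ j → ∀ c : ℝ, h i ≠ c • h j) :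
    LinearIndependent ℝ
      (fun i : Fin n => PiTensorProduct.tprod ℝ (fun _ : Fin (n - 1) => h i)) :=
  tensor_powers_linearIndependent_general n h hcol
end

section
/- Let m ≥ 1, let H be a real Hilbert space, and let p₁, …, p_{2m} be nonzero elements of H such that no pair is collinear. Suppose α₁, …, α_{2m} are nonzero real numbers with ∑_{i=1}^{2m} α_i · p_i^{⊗(2m−2)} = 0 in the (2m−2)-fold tensor power H^{⊗(2m−2)} over ℝ. Then exactly m of the coefficients α_i are negative (and exactly m are positive). -/
open Finset Polynomial RealInnerProductSpace

lemma aux_card_filter_lt (n a : ℕ) (h : a ≤ n) :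
    ((Finset.univ : Finset (Fin n)).filter fun k : Fin n => (k : ℕ) < a).card = a := by
  have h2 : ((Finset.univ : Finset (Fin n)).filter fun k : Fin n => (k : ℕ) < a).card
      = (Finset.range a).card := by
    refine Finset.card_bij' (fun (k : Fin n) _ => (k : ℕ))
      (fun t ht => (⟨t, by simp only [Finset.mem_range] at ht; omega⟩ : Fin n)) ?_ ?_ ?_ ?_
    · intro k hk; simp only [Finset.mem_filter] at hk; simpa using hk.2
    · intro t ht; simp only [Finset.mem_range] at ht; simp [ht]
    · intro k hk; simp
    · intro t ht; simp
  simpa using h2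

lemma aux_exists_inner_ne_zero {H : Type*} [NormedAddCommGroup H] [InnerProductSpace ℝ H]
    {ι : Type*} (s : Finset ι) (w : ι → H) (hw : ∀ i ∈ s, w i ≠ 0) :
    ∃ u : H, ∀ i ∈ s, ⟪u, w i⟫ ≠ 0 := by
  classical
  induction s using Finset.induction_on with
  | empty => exact ⟨0, fun i hi => absurd hi (Finset.notMem_empty i)⟩
  | insert a s' ha ih =>
    obtain ⟨u, hu⟩ := ih (fun i hi => hw i (Finset.mem_insert_of_mem hi))
    obtain ⟨t, ht⟩ := Infinite.exists_notMem_finset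
      ((insert a s').image fun i => -⟪u, w i⟫ / ⟪w a, w i⟫)
    refine ⟨u + t • w a, fun i hi => ?_⟩
    rw [inner_add_left, real_inner_smul_left]
    by_cases hc : ⟪w a, w i⟫ = 0
    · rcases Finset.mem_insert.mp hi with rfl | hi'
      · exact absurd hc (by
          simpa [real_inner_self_eq_norm_sq] using
            pow_ne_zero 2 (norm_ne_zero_iff.mpr (hw i (Finset.mem_insert_self i s'))))
      · simpa [hc] using hu i hi'
    · intro hzero
      apply ht
      refine Finset.mem_image.mpr ⟨i, hi, ?_⟩
      field_simp
      linarith [hzero]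

lemma aux_coeff_linear_pow (a b : ℝ) (n s : ℕ) (hs : s ≤ n) :
    ((Polynomial.C a + Polynomial.C b * Polynomial.X) ^ n).coeff s
      = (n.choose s : ℝ) * (a ^ (n - s) * b ^ s) := by
  rw [add_pow, Polynomial.finset_sum_coeff]
  have key : ∀ k, ((Polynomial.C a) ^ k * (Polynomial.C b * Polynomial.X) ^ (n - k)
      * ((n.choose k : ℕ) : ℝ[X])).coeff s
      = if n - k = s then a ^ k * b ^ (n - k) * (n.choose k : ℝ) else 0 := by
    intro k
    have h1 : (Polynomial.C a) ^ k * (Polynomial.C b * Polynomial.X) ^ (n - k)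
        * ((n.choose k : ℕ) : ℝ[X])
        = Polynomial.C (a ^ k * b ^ (n - k) * (n.choose k : ℝ)) * Polynomial.X ^ (n - k) := by
      rw [← Polynomial.C_eq_natCast]
      simp only [mul_pow, ← Polynomial.C_pow, Polynomial.C_mul]
      ring
    rw [h1, Polynomial.coeff_C_mul, Polynomial.coeff_X_pow]
    by_cases h : s = n - k
    · rw [if_pos h, if_pos h.symm, mul_one]
    · rw [if_neg h, if_neg (fun hh => h hh.symm)]
      ring
  simp only [key]
  rw [Finset.sum_eq_single (n - s)]
  · have h2 : n - (n - s) = s := by omega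
    rw [h2, if_pos rfl, Nat.choose_symm hs]
    ring
  · intro k hk hne
    rw [if_neg]
    simp only [Finset.mem_range] at hk
    omega
  · intro h
    exact absurd (Finset.mem_range.mpr (by omega)) h

lemma aux_indep {H : Type*} [NormedAddCommGroup H] [InnerProductSpace ℝ H]
    {ι : Type*} [Fintype ι] (d : ℕ) (q : ι → H) (h0 : ∀ i, q i ≠ 0)
    (hcol : ∀ i j, i ≠ j → ∀ c : ℝ, q i ≠ c • q j) (hcard : Fintype.card ι ≤ d + 1) :
    LinearIndependent ℝ (fun i => fun x : H => (⟪x, q i⟫ : ℝ) ^ d) := by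
  classical
  rw [Fintype.linearIndependent_iff]
  intro c hc
  obtain ⟨u, hu⟩ := aux_exists_inner_ne_zero Finset.univ q (fun i _ => h0 i)
  set A : ι → ℝ := fun i => ⟪u, q i⟫ with hA
  have hA0 : ∀ i, A i ≠ 0 := fun i => hu i (Finset.mem_univ i)
  obtain ⟨z, hz⟩ := aux_exists_inner_ne_zero
      (Finset.univ.filter fun ij : ι × ι => ij.1 ≠ ij.2)
      (fun ij => A ij.1 • q ij.2 - A ij.2 • q ij.1) (by
    rintro ⟨i, j⟩ hij
    simp only [Finset.mem_filter] at hij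
    intro hW
    have heq : A i • q j = A j • q i := by rwa [sub_eq_zero] at hW
    have : q j = (A j / A i) • q i := by
      rw [div_eq_mul_inv, mul_comm, mul_smul]
      rw [← heq, ← mul_smul, inv_mul_cancel₀ (hA0 i), one_smul]
    exact hcol j i (Ne.symm hij.2) _ this)
  set B : ι → ℝ := fun i => ⟪z, q i⟫ with hB
  have hAB : ∀ i j, i ≠ j → A i * B j - A j * B i ≠ 0 := by
    intro i j hij
    have := hz (i, j) (by simp [hij])
    simpa [inner_sub_right, real_inner_smul_right] using this
  set r : ι → ℝ := fun i => B i / A i with hr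
  have hBr : ∀ i, B i = A i * r i := by
    intro i; rw [hr]; rw [mul_comm, div_mul_cancel₀ _ (hA0 i)]
  have hrinj : Function.Injective r := by
    intro i j hij
    by_contra hne
    apply hAB i j hne
    have : B i * A j = B j * A i := by
      have := div_eq_div_iff (hA0 i) (hA0 j) |>.mp hij
      linarith
    linarith
  set Q : ℝ[X] := ∑ i, Polynomial.C (c i)
    * (Polynomial.C (A i) + Polynomial.C (B i) * Polynomial.X) ^ d with hQ
  have hinner : ∀ (t : ℝ) i, (⟪u + t • z, q i⟫ : ℝ) = A i + B i * t := by
    intro t i; rw [inner_add_left, real_inner_smul_left]; ring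
  have hQeval : ∀ t : ℝ, Q.eval t = 0 := by
    intro t
    have hct := congrFun hc (u + t • z)
    simp only [Finset.sum_apply, Pi.smul_apply, smul_eq_mul, Pi.zero_apply] at hct
    rw [hQ]
    simp only [Polynomial.eval_finset_sum, Polynomial.eval_mul, Polynomial.eval_pow,
      Polynomial.eval_add, Polynomial.eval_C, Polynomial.eval_mul, Polynomial.eval_X]
    rw [← hct]
    congr 1; funext i
    rw [hinner t i]
  have hQ0 : Q = 0 := by
    apply Polynomial.funext; intro t; rw [hQeval t]; simp
  have hcoeff : ∀ s : ℕ, s ≤ d →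
      ∑ i, c i * ((d.choose s : ℝ) * (A i ^ (d - s) * B i ^ s)) = 0 := by
    intro s hs
    have h1 : Q.coeff s = 0 := by rw [hQ0]; simp
    rw [hQ, Polynomial.finset_sum_coeff] at h1
    simpa only [Polynomial.coeff_C_mul, aux_coeff_linear_pow _ _ _ _ hs] using h1
  have hv : ∀ i, c i * A i ^ d = 0 := by
    set k := Fintype.card ι with hk
    set e := (Fintype.equivFin ι).symm with he
    have hmain : (fun b : Fin k => c (e b) * A (e b) ^ d) = 0 := by
      apply Matrix.eq_zero_of_forall_pow_sum_mul_pow_eq_zero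
        (f := fun b => r (e b)) (hrinj.comp e.injective)
      intro sj
      have hs : (sj : ℕ) ≤ d := by have := sj.2; omega
      have h1 := hcoeff sj hs
      have h2 : ∀ i, c i * ((d.choose (sj : ℕ) : ℝ) * (A i ^ (d - (sj : ℕ)) * B i ^ (sj : ℕ)))
          = (d.choose (sj : ℕ) : ℝ) * ((c i * A i ^ d) * r i ^ (sj : ℕ)) := by
        intro i
        rw [hBr i, mul_pow, ← mul_assoc (A i ^ (d - (sj : ℕ))), ← pow_add]
        have : d - (sj : ℕ) + (sj : ℕ) = d := by omega
        rw [this]; ring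
      rw [Finset.sum_congr rfl (fun i _ => h2 i), ← Finset.mul_sum] at h1
      have hch : (d.choose (sj : ℕ) : ℝ) ≠ 0 :=
        Nat.cast_ne_zero.mpr (Nat.choose_pos hs).ne'
      have hsum0 : ∑ i, (c i * A i ^ d) * r i ^ (sj : ℕ) = 0 :=
        (mul_eq_zero.mp h1).resolve_left hch
      rw [← Equiv.sum_comp e (fun i => (c i * A i ^ d) * r i ^ (sj : ℕ))] at hsum0
      exact hsum0
    intro i
    have := congrFun hmain (e.symm i)
    simpa using this
  intro i
  rcases mul_eq_zero.mp (hv i) with h | h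
  · exact h
  · exact absurd h (pow_ne_zero d (hA0 i))

lemma aux_exists_points {X : Type*} {ι : Type*} [Fintype ι]
    (f : ι → (X → ℝ)) (hf : LinearIndependent ℝ f) :
    ∃ x : ι → X, ∀ ξ : ι → ℝ, (∀ b, ∑ a, ξ a * f b (x a) = 0) → ξ = 0 := by
  classical
  set G : X → (ι → ℝ) := fun x b => f b x with hG
  have hspan : Submodule.span ℝ (Set.range G) = ⊤ := by
    by_contra hne
    obtain ⟨φ, hφne, hφ⟩ := Submodule.exists_dual_map_eq_bot_of_lt_top
      (lt_top_iff_ne_top.mpr hne) inferInstance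
    have hφG : ∀ x, φ (G x) = 0 := by
      intro x
      have hmem : φ (G x) ∈ Submodule.map φ (Submodule.span ℝ (Set.range G)) :=
        Submodule.mem_map_of_mem (Submodule.subset_span ⟨x, rfl⟩)
      rw [hφ] at hmem; simpa using hmem
    have hzero : ∀ b, φ (fun j => if b = j then (1:ℝ) else 0) = 0 := by
      have hfun : ∑ b, φ (fun j => if b = j then (1:ℝ) else 0) • f b = 0 := by
        funext x
        simp only [Finset.sum_apply, Pi.smul_apply, smul_eq_mul, Pi.zero_apply]
        have h5 := LinearMap.pi_apply_eq_sum_univ φ (G x)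
        rw [hφG x] at h5
        have h6 : ∀ b, G x b • φ (fun j => if b = j then (1:ℝ) else 0)
            = φ (fun j => if b = j then (1:ℝ) else 0) * f b x := by
          intro b; rw [smul_eq_mul, mul_comm]
        rw [Finset.sum_congr rfl (fun b _ => h6 b)] at h5
        exact h5.symm
      exact fun b => Fintype.linearIndependent_iff.mp hf _ hfun b
    apply hφne
    apply LinearMap.ext
    intro y
    rw [LinearMap.pi_apply_eq_sum_univ φ y]
    simp only [smul_eq_mul, LinearMap.zero_apply]
    rw [Finset.sum_congr rfl (fun b _ => by rw [hzero b, mul_zero])]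
    exact Finset.sum_const_zero
  obtain ⟨tset, htsub, htspan, htli⟩ := exists_linearIndependent ℝ (Set.range G)
  rw [hspan] at htspan
  let bas : Module.Basis tset ℝ (ι → ℝ) := Module.Basis.mk htli (by rw [Subtype.range_coe, htspan])
  haveI : Fintype tset := FiniteDimensional.fintypeBasisIndex bas
  have hcard : Fintype.card ι = Fintype.card tset := by
    rw [← Module.finrank_eq_card_basis bas, Module.finrank_fintype_fun_eq_card]
  let e : ι ≃ tset := Fintype.equivOfCardEq hcard
  have hmem : ∀ a : ι, ((e a : ι → ℝ)) ∈ Set.range G := fun a => htsub (e a).2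
  choose x hx using hmem
  refine ⟨x, fun ξ hξ => ?_⟩
  have hli2 : LinearIndependent ℝ (fun a : ι => G (x a)) := by
    have hxe : (fun a : ι => G (x a)) = (fun a => (e a : ι → ℝ)) := funext fun a => hx a
    rw [hxe]
    exact htli.comp e e.injective
  apply funext (Fintype.linearIndependent_iff.mp hli2 ξ ?_)
  funext b
  simp only [Finset.sum_apply, Pi.smul_apply, smul_eq_mul, Pi.zero_apply]
  exact hξ b

lemma aux_core {H : Type*} [NormedAddCommGroup H] [InnerProductSpace ℝ H]
    (m : ℕ) (hm : 1 ≤ m) (p : Fin (2 * m) → H) (hp0 : ∀ i, p i ≠ 0)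
    (hcol : ∀ i j, i ≠ j → ∀ c : ℝ, p i ≠ c • p j)
    (α : Fin (2 * m) → ℝ) (hα : ∀ i, α i ≠ 0)
    (hB : ∀ x y : H, ∑ i, α i * ((⟪x, p i⟫ : ℝ) ^ (m - 1) * (⟪y, p i⟫ : ℝ) ^ (m - 1)) = 0) :
    m ≤ (Finset.univ.filter fun i => α i < 0).card := by
  classical
  by_contra hn
  push_neg at hn
  set Neg : Finset (Fin (2 * m)) := Finset.univ.filter fun i => α i < 0 with hNeg
  set Pos : Finset (Fin (2 * m)) := Finset.univ.filter fun i => 0 < α i with hPos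
  have hNegPos : Finset.univ.filter (fun i => ¬ α i < 0) = Pos := by
    ext i
    simp only [Finset.mem_filter, Finset.mem_univ, true_and, not_lt, hPos]
    exact ⟨fun h => lt_of_le_of_ne h (Ne.symm (hα i)), le_of_lt⟩
  have hcardsum : Neg.card + Pos.card = 2 * m := by
    rw [hNeg, ← hNegPos, Finset.card_filter_add_card_filter_not]
    simp
  have hPoscard : m ≤ Pos.card := by omega
  obtain ⟨P₀, hP₀sub, hP₀card⟩ := Finset.exists_subset_card_eq hPoscard
  have hind : LinearIndependent ℝ
      (fun i : ↥P₀ => fun x : H => (⟪x, p i⟫ : ℝ) ^ (m - 1)) := by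
    apply aux_indep (m - 1) (fun i : ↥P₀ => p i) (fun i => hp0 i)
      (fun i j hij c => hcol i j (fun h => hij (Subtype.ext h)) c)
    rw [Fintype.card_coe, hP₀card]; omega
  obtain ⟨x, hx⟩ := aux_exists_points _ hind
  set M : Matrix ↥Neg ↥P₀ ℝ := fun j a => (⟪x a, p j⟫ : ℝ) ^ (m - 1) with hM
  have hker : ¬ Function.Injective M.mulVecLin := by
    intro hinj
    have hle := LinearMap.finrank_le_finrank_of_injective hinj
    rw [Module.finrank_fintype_fun_eq_card, Module.finrank_fintype_fun_eq_card,
      Fintype.card_coe, Fintype.card_coe, hP₀card] at hle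
    omega
  rw [← LinearMap.ker_eq_bot] at hker
  obtain ⟨ξ, hξker, hξ0⟩ := Submodule.ne_bot_iff _ |>.mp hker
  rw [LinearMap.mem_ker] at hξker
  set s : Fin (2 * m) → ℝ := fun i => ∑ a : ↥P₀, ξ a * (⟪x a, p i⟫ : ℝ) ^ (m - 1) with hs
  have hNegzero : ∀ j ∈ Neg, s j = 0 := by
    intro j hj
    have := congrFun hξker ⟨j, hj⟩
    simp only [Matrix.mulVecLin_apply, Pi.zero_apply] at this
    rw [hs]
    rw [← this, Matrix.mulVec, dotProduct]
    exact Finset.sum_congr rfl fun a _ => by rw [hM, mul_comm]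
  have hkey : ∑ i, α i * s i ^ 2 = 0 := by
    have h1 : ∀ i, α i * s i ^ 2 = ∑ a : ↥P₀, ∑ b : ↥P₀,
        ξ a * ξ b * (α i * ((⟪x a, p i⟫ : ℝ) ^ (m - 1) * (⟪x b, p i⟫ : ℝ) ^ (m - 1))) := by
      intro i
      rw [sq, hs, Finset.sum_mul_sum, Finset.mul_sum]
      refine Finset.sum_congr rfl fun a _ => ?_
      rw [Finset.mul_sum]
      refine Finset.sum_congr rfl fun b _ => ?_
      ring
    have h2 : ∀ a b : ↥P₀, ∑ i, ξ a * ξ b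
        * (α i * ((⟪x a, p i⟫ : ℝ) ^ (m - 1) * (⟪x b, p i⟫ : ℝ) ^ (m - 1))) = 0 := by
      intro a b
      rw [← Finset.mul_sum, hB (x a) (x b), mul_zero]
    calc ∑ i, α i * s i ^ 2
        = ∑ i, ∑ a : ↥P₀, ∑ b : ↥P₀, ξ a * ξ b
          * (α i * ((⟪x a, p i⟫ : ℝ) ^ (m - 1) * (⟪x b, p i⟫ : ℝ) ^ (m - 1))) :=
          Finset.sum_congr rfl fun i _ => h1 i
      _ = ∑ a : ↥P₀, ∑ i, ∑ b : ↥P₀, ξ a * ξ b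
          * (α i * ((⟪x a, p i⟫ : ℝ) ^ (m - 1) * (⟪x b, p i⟫ : ℝ) ^ (m - 1))) :=
          Finset.sum_comm
      _ = ∑ a : ↥P₀, ∑ b : ↥P₀, ∑ i, ξ a * ξ b
          * (α i * ((⟪x a, p i⟫ : ℝ) ^ (m - 1) * (⟪x b, p i⟫ : ℝ) ^ (m - 1))) :=
          Finset.sum_congr rfl fun a _ => Finset.sum_comm
      _ = 0 := by
          rw [Finset.sum_congr rfl fun a _ => Finset.sum_congr rfl fun b _ => h2 a b]
          simp
  have hsplit := Finset.sum_filter_add_sum_filter_not Finset.univ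
    (fun i => α i < 0) (fun i => α i * s i ^ 2)
  rw [hkey] at hsplit
  have hNegSum : ∑ i ∈ Finset.univ.filter (fun i => α i < 0), α i * s i ^ 2 = 0 := by
    apply Finset.sum_eq_zero
    intro j hj
    rw [hNegzero j (by rwa [hNeg])]
    ring
  rw [hNegSum, zero_add, hNegPos] at hsplit
  have hPoszero : ∀ i ∈ Pos, s i = 0 := by
    intro i hi
    have hterm := (Finset.sum_eq_zero_iff_of_nonneg (fun i hi => by
      have : 0 < α i := by
        rw [hPos] at hi; exact (Finset.mem_filter.mp hi).2
      positivity)).mp hsplit i hi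
    have hαpos : 0 < α i := by rw [hPos] at hi; exact (Finset.mem_filter.mp hi).2
    have : s i ^ 2 = 0 := by
      rcases mul_eq_zero.mp hterm with h | h
      · exact absurd h hαpos.ne'
      · exact h
    exact pow_eq_zero_iff (by norm_num) |>.mp this
  apply hξ0
  apply hx
  intro b
  have hb : (b : Fin (2 * m)) ∈ Pos := hP₀sub b.2
  have := hPoszero b hb
  rw [hs] at this
  exact this

/-- **Balanced sign pattern.** If `p₁, …, p_{2m}` (`m ≥ 1`) are nonzero, pairwise
non-collinear vectors of a real Hilbert space and `∑ i, αᵢ • pᵢ^{⊗(2m-2)} = 0` with all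
`αᵢ ≠ 0`, then exactly `m` of the coefficients `αᵢ` are negative and exactly `m` are
positive. -/
theorem tensor_power_relation_sign_balanced
    {H : Type*} [NormedAddCommGroup H] [InnerProductSpace ℝ H] [CompleteSpace H]
    (m : ℕ) (hm : 1 ≤ m) (p : Fin (2 * m) → H) (hp0 : ∀ i, p i ≠ 0)
    (hcol : ∀ i j, i ≠ j → ∀ c : ℝ, p i ≠ c • p j)
    (α : Fin (2 * m) → ℝ) (hα : ∀ i, α i ≠ 0)
    (hsum : ∑ i, α i • PiTensorProduct.tprod ℝ (fun _ : Fin (2 * m - 2) => p i) = 0) :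
    (Finset.univ.filter fun i => α i < 0).card = m ∧
    (Finset.univ.filter fun i => 0 < α i).card = m := by
  classical
  have hB : ∀ x y : H,
      ∑ i, α i * ((⟪x, p i⟫ : ℝ) ^ (m - 1) * (⟪y, p i⟫ : ℝ) ^ (m - 1)) = 0 := by
    intro x y
    set c : Fin (2 * m - 2) → H := fun k => if (k : ℕ) < m - 1 then x else y with hc
    set L := PiTensorProduct.lift
      ((MultilinearMap.mkPiAlgebra ℝ (Fin (2 * m - 2)) ℝ).compLinearMap
        (fun k => ((innerSL ℝ (c k) : H →L[ℝ] ℝ) : H →ₗ[ℝ] ℝ))) with hL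
    have h0 := congrArg L hsum
    rw [map_sum, map_zero] at h0
    simp only [LinearMap.map_smul, hL, PiTensorProduct.lift.tprod,
      MultilinearMap.compLinearMap_apply, MultilinearMap.mkPiAlgebra_apply,
      ContinuousLinearMap.coe_coe, innerSL_apply_apply, smul_eq_mul] at h0
    have hprod : ∀ i, ∏ k : Fin (2 * m - 2), (⟪c k, p i⟫ : ℝ)
        = (⟪x, p i⟫ : ℝ) ^ (m - 1) * (⟪y, p i⟫ : ℝ) ^ (m - 1) := by
      intro i
      have hck : ∀ k : Fin (2 * m - 2), (⟪c k, p i⟫ : ℝ)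
          = if (k : ℕ) < m - 1 then (⟪x, p i⟫ : ℝ) else (⟪y, p i⟫ : ℝ) := by
        intro k; rw [hc]; by_cases h : (k : ℕ) < m - 1 <;> simp [h]
      rw [Finset.prod_congr rfl fun k _ => hck k, Finset.prod_ite,
        Finset.prod_const, Finset.prod_const]
      have hcA : (Finset.univ.filter fun k : Fin (2 * m - 2) => (k : ℕ) < m - 1).card
          = m - 1 := aux_card_filter_lt _ _ (by omega)
      have hcB : (Finset.univ.filter fun k : Fin (2 * m - 2) => ¬ (k : ℕ) < m - 1).card
          = m - 1 := by
        have h1 := Finset.card_filter_add_card_filter_not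
          (s := (Finset.univ : Finset (Fin (2 * m - 2))))
          (p := fun k : Fin (2 * m - 2) => (k : ℕ) < m - 1)
        rw [hcA] at h1
        simp only [Finset.card_univ, Fintype.card_fin] at h1
        omega
      rw [hcA, hcB]
    rw [Finset.sum_congr rfl fun i _ => by rw [hprod i]] at h0
    exact h0
  have h1 : m ≤ (Finset.univ.filter fun i => α i < 0).card :=
    aux_core m hm p hp0 hcol α hα hB
  have hB' : ∀ x y : H,
      ∑ i, (-α i) * ((⟪x, p i⟫ : ℝ) ^ (m - 1) * (⟪y, p i⟫ : ℝ) ^ (m - 1)) = 0 := by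
    intro x y
    have := hB x y
    simp only [neg_mul, Finset.sum_neg_distrib, this, neg_zero]
  have h2 : m ≤ (Finset.univ.filter fun i => 0 < α i).card := by
    have h3 := aux_core m hm p hp0 hcol (fun i => -α i) (fun i => neg_ne_zero.mpr (hα i)) hB'
    have h4 : (Finset.univ.filter fun i => -α i < 0) = Finset.univ.filter fun i => 0 < α i := by
      ext i; simp [neg_lt_zero]
    rwa [h4] at h3
  have hNegPos : (Finset.univ.filter fun i => ¬ α i < 0)
      = Finset.univ.filter fun i => 0 < α i := by
    ext i
    simp only [Finset.mem_filter, Finset.mem_univ, true_and, not_lt]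
    exact ⟨fun h => lt_of_le_of_ne h (Ne.symm (hα i)), le_of_lt⟩
  have hcardsum := Finset.card_filter_add_card_filter_not
    (s := (Finset.univ : Finset (Fin (2 * m)))) (p := fun i => α i < 0)
  rw [hNegPos] at hcardsum
  simp only [Finset.card_univ, Fintype.card_fin] at hcardsum
  omega
end
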